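/- In the ring Z_2[√2], the element 2√2 = (√2)^3 cannot be written as the sum of at most five k-th powers, for any k ≡ 2 mod 4 with k ≥ 6. -/

import Mathlib

open Polynomial

/-- The ring `ℤ_2[√2]`, realized as `ℤ_[2][X]/(X² - 2)`. -/
noncomputable abbrev Z2Sqrt2 : Type := AdjoinRoot ((X : ℤ_[2][X]) ^ 2 - C 2)

/-- `√2` in `ℤ_2[√2]`. -/
noncomputable def sqrt2 : Z2Sqrt2 := AdjoinRoot.root _


/-- Auxiliary finite ring `ℤ[√2]/8`, with elements `⟨a, b⟩ = a + b√2`, `a b : ZMod 8`. -/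
@[ext] structure Wr where
  a : ZMod 8
  b : ZMod 8
deriving DecidableEq, Fintype

namespace Wr

instance : Add Wr := ⟨fun x y => ⟨x.a + y.a, x.b + y.b⟩⟩
instance : Mul Wr := ⟨fun x y => ⟨x.a * y.a + 2 * (x.b * y.b), x.a * y.b + x.b * y.a⟩⟩
instance : Neg Wr := ⟨fun x => ⟨-x.a, -x.b⟩⟩
instance : Zero Wr := ⟨⟨0, 0⟩⟩
instance : One Wr := ⟨⟨1, 0⟩⟩

lemma add_def (x y : Wr) : x + y = ⟨x.a + y.a, x.b + y.b⟩ := rfl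
lemma mul_def (x y : Wr) : x * y = ⟨x.a * y.a + 2 * (x.b * y.b), x.a * y.b + x.b * y.a⟩ := rfl
lemma neg_def (x : Wr) : -x = ⟨-x.a, -x.b⟩ := rfl
lemma zero_def : (0 : Wr) = ⟨0, 0⟩ := rfl
lemma one_def : (1 : Wr) = ⟨1, 0⟩ := rfl

instance : CommRing Wr where
  add_assoc := by intros; simp [add_def, Wr.mk.injEq]; constructor <;> ring
  zero_add := by intros; simp [add_def, zero_def]
  add_zero := by intros; simp [add_def, zero_def]
  add_comm := by intros; simp [add_def, Wr.mk.injEq]; constructor <;> ring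
  left_distrib := by intros; simp [add_def, mul_def, Wr.mk.injEq]; constructor <;> ring
  right_distrib := by intros; simp [add_def, mul_def, Wr.mk.injEq]; constructor <;> ring
  zero_mul := by intros; simp [mul_def, zero_def]
  mul_zero := by intros; simp [mul_def, zero_def]
  mul_assoc := by intros; simp [mul_def, Wr.mk.injEq]; constructor <;> ring
  one_mul := by intros; simp [mul_def, one_def]
  mul_one := by intros; simp [mul_def, one_def]
  mul_comm := by intros; simp [mul_def, Wr.mk.injEq]; constructor <;> ring
  neg_add_cancel := by intros; simp [add_def, neg_def, zero_def]
  nsmul := nsmulRec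
  zsmul := zsmulRec

/-- Squares and sixth powers of units of `ℤ[√2]/8` lie in a 4-element set,
and units have order dividing 8. -/
lemma key : ∀ t : Wr, t.a.val % 2 = 1 →
    t ^ 8 = 1 ∧
    (t ^ 2 = ⟨1,0⟩ ∨ t ^ 2 = ⟨1,4⟩ ∨ t ^ 2 = ⟨3,2⟩ ∨ t ^ 2 = ⟨3,6⟩) ∧
    (t ^ 6 = ⟨1,0⟩ ∨ t ^ 6 = ⟨1,4⟩ ∨ t ^ 6 = ⟨3,2⟩ ∨ t ^ 6 = ⟨3,6⟩) := by decide

lemma sqrt2six : (⟨0,1⟩ : Wr) ^ 6 = 0 := by decide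

lemma evensplit : ∀ A : ZMod 8, A.val % 2 = 1 ∨ ∃ B : ZMod 8, A = 2 * B := by decide

/-- The possible values (mod 8) of a `k`-th power, `k ≡ 2 [MOD 4]`, `k ≥ 6`. -/
def v : Fin 5 → Wr := ![0, ⟨1,0⟩, ⟨1,4⟩, ⟨3,2⟩, ⟨3,6⟩]

lemma final : ∀ t₀ t₁ t₂ t₃ t₄ : Fin 5,
    v t₀ + v t₁ + v t₂ + v t₃ + v t₄ ≠ ⟨0,2⟩ := by decide

end Wr

/-- The natural map `ℤ_[2] → ℤ[√2]/8` on coefficients. -/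
noncomputable def homW : ℤ_[2] →+* Wr where
  toFun x := ⟨PadicInt.toZModPow 3 x, 0⟩
  map_one' := by simp [Wr.one_def]
  map_mul' x y := by simp [Wr.mul_def, Wr.mk.injEq]
  map_zero' := by simp [Wr.zero_def]
  map_add' x y := by simp [Wr.add_def]

lemma homW_apply (x : ℤ_[2]) : homW x = ⟨PadicInt.toZModPow 3 x, 0⟩ := rfl

lemma homW_root : ((X : ℤ_[2][X]) ^ 2 - C 2).eval₂ homW ⟨0, 1⟩ = 0 := by
  have h2 : homW 2 = ⟨2, 0⟩ := by
    rw [homW_apply, map_ofNat]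
  simp only [eval₂_sub, eval₂_pow, eval₂_X, eval₂_C, h2]
  decide

/-- Reduction `ℤ_2[√2] → ℤ[√2]/8`. -/
noncomputable def ψ : Z2Sqrt2 →+* Wr := AdjoinRoot.lift homW ⟨0, 1⟩ homW_root

lemma ψ_sqrt2 : ψ sqrt2 = ⟨0, 1⟩ := AdjoinRoot.lift_root _

lemma ψ_alg (x : ℤ_[2]) : ψ (algebraMap ℤ_[2] Z2Sqrt2 x) = homW x := by
  rw [AdjoinRoot.algebraMap_eq]; exact AdjoinRoot.lift_of _

lemma sqrt2_sq : sqrt2 ^ 2 = algebraMap ℤ_[2] Z2Sqrt2 2 := by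
  have h := AdjoinRoot.mk_self (f := (X : ℤ_[2][X]) ^ 2 - C 2)
  rw [map_sub, map_pow, AdjoinRoot.mk_X, AdjoinRoot.mk_C, sub_eq_zero] at h
  rw [AdjoinRoot.algebraMap_eq]
  exact h

/-- Every element of `ℤ_2[√2]` is `a + b√2`. -/
lemma repr2 (z : Z2Sqrt2) :
    ∃ a b : ℤ_[2], z = algebraMap ℤ_[2] Z2Sqrt2 a + algebraMap ℤ_[2] Z2Sqrt2 b * sqrt2 := by
  obtain ⟨q, rfl⟩ := AdjoinRoot.mk_surjective z
  set f : ℤ_[2][X] := X ^ 2 - C 2 with hf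
  have hm : f.Monic := monic_X_pow_sub_C _ (by norm_num)
  set r : ℤ_[2][X] := q %ₘ f with hr
  refine ⟨r.coeff 0, r.coeff 1, ?_⟩
  have hdeg : r.degree < 2 := by
    have := degree_modByMonic_lt q hm
    rwa [hf, degree_X_pow_sub_C (by norm_num) (2 : ℤ_[2])] at this
  have hrepr : r = C (r.coeff 1) * X + C (r.coeff 0) := by
    rcases eq_or_ne r 0 with h0 | h0
    · simp [h0]
    · refine eq_X_add_C_of_natDegree_le_one ?_
      have h2 : r.natDegree < 2 := (natDegree_lt_iff_degree_lt h0).mpr (by exact_mod_cast hdeg)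
      omega
  have hq : q = r + f * (q /ₘ f) := by rw [hr, modByMonic_add_div q f]
  calc AdjoinRoot.mk f q = AdjoinRoot.mk f (r + f * (q /ₘ f)) := by rw [← hq]
    _ = AdjoinRoot.mk f r := by rw [map_add, map_mul, AdjoinRoot.mk_self, zero_mul, add_zero]
    _ = _ := by
        conv_lhs => rw [hrepr]
        rw [map_add, map_mul, AdjoinRoot.mk_C, AdjoinRoot.mk_C, AdjoinRoot.mk_X,
          AdjoinRoot.algebraMap_eq, add_comm]
        rfl

/-- For `k ≡ 2 mod 4` with `k ≥ 6`, the element `2√2 = (√2)³` of `ℤ_2[√2]`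
is not a sum of at most five `k`-th powers. -/
theorem sqrt2_cubed_not_sum_five (k : ℕ) (hk4 : k % 4 = 2) (hk : 6 ≤ k) :
    ¬ ∃ f : Fin 5 → Z2Sqrt2, sqrt2 ^ 3 = ∑ i, f i ^ k := by
  rintro ⟨f, hf⟩
  have key_i : ∀ i, ∃ j : Fin 5, ψ (f i ^ k) = Wr.v j := by
    intro i
    obtain ⟨a, b, hz⟩ := repr2 (f i)
    rcases Wr.evensplit (PadicInt.toZModPow 3 a) with hodd | ⟨B, hB⟩
    · -- unit case
      have hψ : ψ (f i) = ⟨PadicInt.toZModPow 3 a, PadicInt.toZModPow 3 b⟩ := by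
        rw [hz, map_add, map_mul, ψ_alg, ψ_alg, ψ_sqrt2, homW_apply, homW_apply,
          Wr.mul_def, Wr.add_def]
        simp
      obtain ⟨h8, h2, h6⟩ := Wr.key (ψ (f i)) (by rw [hψ]; exact hodd)
      have hpow : ψ (f i ^ k) = ψ (f i) ^ (k % 8) := by
        rw [map_pow]
        calc ψ (f i) ^ k = ψ (f i) ^ (8 * (k / 8) + k % 8) := by rw [Nat.div_add_mod]
          _ = (ψ (f i) ^ 8) ^ (k / 8) * ψ (f i) ^ (k % 8) := by rw [pow_add, pow_mul]
          _ = ψ (f i) ^ (k % 8) := by rw [h8, one_pow, one_mul]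
      have hk8 : k % 8 = 2 ∨ k % 8 = 6 := by omega
      rcases hk8 with h | h <;> rw [h] at hpow
      · rcases h2 with h' | h' | h' | h'
        exacts [⟨1, by rw [hpow, h']; rfl⟩, ⟨2, by rw [hpow, h']; rfl⟩,
          ⟨3, by rw [hpow, h']; rfl⟩, ⟨4, by rw [hpow, h']; rfl⟩]
      · rcases h6 with h' | h' | h' | h'
        exacts [⟨1, by rw [hpow, h']; rfl⟩, ⟨2, by rw [hpow, h']; rfl⟩,
          ⟨3, by rw [hpow, h']; rfl⟩, ⟨4, by rw [hpow, h']; rfl⟩]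
    · -- non-unit case : 2 ∣ a
      have hdvd : (2 : ℤ_[2]) ∣ a := by
        have h1 : PadicInt.toZModPow 3 (a - 2 * ((B.val : ℕ) : ℤ_[2])) = 0 := by
          rw [map_sub, map_mul, map_natCast, map_ofNat, hB, ZMod.natCast_val, ZMod.cast_id]
          ring
        rw [← RingHom.mem_ker, PadicInt.ker_toZModPow, Ideal.mem_span_singleton] at h1
        obtain ⟨c, hc⟩ := h1
        exact ⟨((B.val : ℕ) : ℤ_[2]) + 4 * c, by linear_combination hc⟩
      obtain ⟨c, hc⟩ := hdvd
      have hw : f i = sqrt2 * (algebraMap ℤ_[2] Z2Sqrt2 b + algebraMap ℤ_[2] Z2Sqrt2 c * sqrt2) := by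
        rw [hz, hc, map_mul]
        linear_combination (algebraMap ℤ_[2] Z2Sqrt2 c) * sqrt2_sq.symm
      refine ⟨0, ?_⟩
      have hsplit : f i ^ k = sqrt2 ^ 6 *
          (sqrt2 ^ (k - 6) * (algebraMap ℤ_[2] Z2Sqrt2 b + algebraMap ℤ_[2] Z2Sqrt2 c * sqrt2) ^ k) := by
        rw [hw, mul_pow, ← mul_assoc, ← pow_add]
        congr 2
        omega
      rw [hsplit, map_mul, map_pow, ψ_sqrt2, Wr.sqrt2six, zero_mul]
      rfl
  choose j hj using key_i
  have hsum := congrArg ψ hf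
  rw [map_pow, ψ_sqrt2, map_sum, Fin.sum_univ_five, hj, hj, hj, hj, hj] at hsum
  have h3 : (⟨0,1⟩ : Wr) ^ 3 = ⟨0,2⟩ := by decide
  exact Wr.final (j 0) (j 1) (j 2) (j 3) (j 4) (h3 ▸ hsum.symm)
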